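/- Let L ⊆ R with D ∩ L ⊆ {max L}. Then every axiom system 𝒜 satisfying 𝒜 ∼ 𝒜_L ∪ {τ^𝒜} is inconsistent, and D_surpr^𝒜 = ∅. -/

import Mathlib

open scoped Classical

/-- Propositional formulas over the six variables `Y_r`, `r ∈ R = Fin 6`
(`0 = Mo, 1 = Tu, 2 = We, 3 = Th, 4 = Fr, 5 = none`). -/
inductive Form : Type where
  | bot : Form
  | var : Fin 6 → Form
  | imp : Form → Form → Form
deriving DecidableEq

def Form.neg (φ : Form) : Form := φ.imp .bot
def Form.top : Form := Form.neg .bot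
def Form.or (φ ψ : Form) : Form := φ.neg.imp ψ
def Form.and (φ ψ : Form) : Form := (φ.imp ψ.neg).neg

/-- Evaluation in the model `r ∈ R`: variable `Y_i` is true iff `i = r`. -/
def Form.eval (r : Fin 6) : Form → Bool
  | .bot => false
  | .var i => decide (i = r)
  | .imp φ ψ => !(Form.eval r φ) || Form.eval r ψ

/-- `r ⊨ φ`. -/
def Sat (r : Fin 6) (φ : Form) : Prop := Form.eval r φ = true

def bigOr (l : List Form) : Form := l.foldr Form.or .bot
def bigAnd (l : List Form) : Form := l.foldr Form.and Form.top

/-- `χ_B = ⋁_{r ∈ B} Y_r`. -/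
def chi (B : Finset (Fin 6)) : Form := bigOr ((B.sort (· ≤ ·)).map Form.var)

/-- The axiom `(Ax_{=1})`: exactly one of the variables `Y_r` is true. -/
def Ax1 : Form :=
  (chi Finset.univ).and
    (bigAnd ((List.finRange 6).flatMap (fun i =>
      (List.finRange 6).map (fun j =>
        if i = j then Form.top else ((Form.var i).neg).or ((Form.var j).neg)))))

/-- Provability from the axiom system `A` (by soundness and completeness of
propositional logic, semantic consequence over the six models). -/
def Proves (A : Set Form) (φ : Form) : Prop :=
  ∀ r : Fin 6, (∀ ψ ∈ A, Sat r ψ) → Sat r φ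

/-- `K` is an `A`-p-knowledge set: `A ⊢ ⟨T ∈ K⟩`. -/
def KSet (A : Set Form) (K : Finset (Fin 6)) : Prop := Proves A (chi K)

/-- `K_A`, the intersection of all `A`-p-knowledge sets. -/
noncomputable def KA (A : Set Form) : Finset (Fin 6) :=
  Finset.univ.filter (fun r => ∀ K : Finset (Fin 6), KSet A K → r ∈ K)

/-- The days `D = {Mo,…,Fr}`. -/
def DaysF : Finset (Fin 6) := {0, 1, 2, 3, 4}

/-- `⟨T ≤ d⟩`. -/
def TLe (d : Fin 6) : Form := chi (Finset.univ.filter (· ≤ d))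
/-- `⟨T ≥ d⟩`. -/
def TGe (d : Fin 6) : Form := chi (Finset.univ.filter (d ≤ ·))
/-- `⟨T = d⟩`. -/
def TEq (d : Fin 6) : Form := Form.var d

/-- Equivalence of axiom systems: mutual provability. -/
def EquivAx (A₁ A₂ : Set Form) : Prop :=
  (∀ φ ∈ A₂, Proves A₁ φ) ∧ (∀ φ ∈ A₁, Proves A₂ φ)

/-- Iverson bracket: `⊤` if `P` holds, else `⊥`. -/
noncomputable def iver (P : Prop) : Form := if P then Form.top else Form.bot

/-- The maximum of `K` (with default `Mo` for `K = ∅`). -/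
def maxD (K : Finset (Fin 6)) : Fin 6 := (K.max).getD 0

/-- `K ∖ {max K}` (with `∅ ∖ {max ∅} = ∅`). -/
def erasemax (K : Finset (Fin 6)) : Finset (Fin 6) := K.erase (maxD K)

/-- `σ^A := ⋀_{K ⊆ R} ([K_A ⊆ K] → χ_{K∖{max K}})`. -/
noncomputable def sigmaA (A : Set Form) : Form :=
  bigAnd (((Finset.univ : Finset (Finset (Fin 6))).toList).map
    (fun K => (iver (KA A ⊆ K)).imp (chi (erasemax K))))

/-- The set of `A`-p-surprising days. -/
def Dsurpr (A : Set Form) : Set (Fin 6) :=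
  {d | d ∈ DaysF ∧ d ∈ KA A ∧ ¬ Proves A (TLe d)}

/-- `A` is inconsistent iff it proves every formula. -/
def Inconsistent (A : Set Form) : Prop := ∀ φ, Proves A φ

/-- `τ^A := ⋁_{d ∈ D} ⋀_{K ⊆ R} ([A ⊢ χ_K] → [d ∈ K∖{max K}])`. -/
noncomputable def tauA (A : Set Form) : Form :=
  bigOr ((DaysF.sort (· ≤ ·)).map (fun d =>
    bigAnd (((Finset.univ : Finset (Finset (Fin 6))).toList).map
      (fun K => (iver (Proves A (chi K))).imp (iver (d ∈ erasemax K))))))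

/-- The axiom system `𝒜_L = {(Ax_{=1}), χ_L}`. -/
def AL (L : Finset (Fin 6)) : Set Form := {Ax1, chi L}

/-! `A ⊢ χ_L` makes `L` an `A`-p-knowledge set, so the conjunct `K = L` of `τ^A` requires its day `d`
to lie in `L ∖ {max L}`, which misses `D` by hypothesis. Hence `τ^A` is the constant `⊥`, and a
system proving it proves everything; then no day fails to be provably past, so none is surprising. -/

lemma not_sat_bot (r : Fin 6) : ¬ Sat r .bot := by
  simp [Sat, Form.eval]

lemma sat_var (r i : Fin 6) : Sat r (.var i) ↔ i = r := by
  simp [Sat, Form.eval]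

lemma sat_imp (r : Fin 6) (φ ψ : Form) : Sat r (φ.imp ψ) ↔ (Sat r φ → Sat r ψ) := by
  cases hφ : φ.eval r <;> simp [Sat, Form.eval, hφ]

lemma sat_bigOr (r : Fin 6) (l : List Form) : Sat r (bigOr l) ↔ ∃ φ ∈ l, Sat r φ := by
  induction l with
  | nil => simpa [bigOr] using not_sat_bot r
  | cons φ l ih =>
    simp only [bigOr, List.foldr_cons] at ih ⊢
    simp only [Form.or, Form.neg, sat_imp, ih, List.exists_mem_cons_iff, not_sat_bot r]
    tauto

lemma sat_bigAnd (r : Fin 6) (l : List Form) : Sat r (bigAnd l) ↔ ∀ φ ∈ l, Sat r φ := by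
  induction l with
  | nil => simp [bigAnd, Form.top, Form.neg, sat_imp]
  | cons φ l ih =>
    simp only [bigAnd, List.foldr_cons] at ih ⊢
    simp only [Form.and, Form.neg, sat_imp, ih, List.forall_mem_cons, not_sat_bot r]
    tauto

lemma sat_chi (r : Fin 6) (B : Finset (Fin 6)) : Sat r (chi B) ↔ r ∈ B := by
  simp [chi, sat_bigOr, sat_var]

lemma sat_iver (r : Fin 6) (P : Prop) : Sat r (iver P) ↔ P := by
  by_cases hP : P <;> simp [Sat, iver, hP, Form.top, Form.neg, Form.eval]

-- `τ^A` has no variables: its truth value is the same in every model.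
lemma sat_tauA (r : Fin 6) (A : Set Form) :
    Sat r (tauA A) ↔ ∃ d ∈ DaysF, ∀ K, Proves A (chi K) → d ∈ erasemax K := by
  simp [tauA, sat_bigOr, sat_bigAnd, sat_imp, sat_iver]

lemma not_sat_tauA {L : Finset (Fin 6)} (h : DaysF ∩ L ⊆ {maxD L}) {A : Set Form}
    (hL : Proves A (chi L)) (r : Fin 6) : ¬ Sat r (tauA A) := by
  intro htau
  obtain ⟨d, hd, hdK⟩ := (sat_tauA r A).mp htau
  have hdL : d ∈ erasemax L := hdK L hL
  have hd_max : d = maxD L :=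
    Finset.mem_singleton.mp (h (Finset.mem_inter.mpr ⟨hd, Finset.mem_of_mem_erase hdL⟩))
  exact Finset.ne_of_mem_erase hdL hd_max

lemma inconsistent_of_proves_of_not_sat {A : Set Form} {φ : Form} (hφ : Proves A φ)
    (hnot : ∀ r, ¬ Sat r φ) : Inconsistent A :=
  fun _ r hr => absurd (hφ r hr) (hnot r)

lemma Dsurpr_eq_empty_of_inconsistent {A : Set Form} (hA : Inconsistent A) : Dsurpr A = ∅ :=
  Set.eq_empty_iff_forall_notMem.mpr fun _ hd => hd.2.2 (hA _)

/-- If `D ∩ L ⊆ {max L}`, then every axiom system `A` with `A ∼ 𝒜_L ∪ {τ^A}`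
is inconsistent, and no day is `A`-p-surprising. -/
theorem stmt_13 (L : Finset (Fin 6)) (h : DaysF ∩ L ⊆ {maxD L})
    (A : Set Form) (heq : EquivAx A (AL L ∪ {tauA A})) :
    Inconsistent A ∧ Dsurpr A = ∅ := by
  have hL : Proves A (chi L) := heq.1 _ (by simp [AL])
  have htau : Proves A (tauA A) := heq.1 _ (by simp)
  have hA : Inconsistent A := inconsistent_of_proves_of_not_sat htau (not_sat_tauA h hL)
  exact ⟨hA, Dsurpr_eq_empty_of_inconsistent hA⟩
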